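/- Let 0 < q < 1, let r ∈ ℝ with q² < r < 1, and let θ, τ ∈ ℝ. Then 1/(2π) + (1/π)·∑_{k=1}^∞ r^k·[((1+(q/r)^(2k))/(1+q^(2k)))·cos(kθ)·cos(kτ) + ((1−(q/r)^(2k))/(1−q^(2k)))·sin(kθ)·sin(kτ)] = (1/(2π))·(1−r²)/(1−2r·cos(θ−τ)+r²) + (1/(2π))·∑_{j=0}^∞ [ (r²−q^(4(2j+1)))/(r²−2r·q^(2(2j+1))·cos(θ+τ)+q^(4(2j+1))) − (1−r²·q^(4(2j+1)))/(1−2r·q^(2(2j+1))·cos(θ+τ)+r²·q^(4(2j+1))) − (r²−q^(8(j+1)))/(r²−2r·q^(4(j+1))·cos(θ−τ)+q^(8(j+1))) + (1−r²·q^(8(j+1)))/(1−2r·q^(4(j+1))·cos(θ−τ)+r²·q^(8(j+1))) ], where both series converge absolutely. -/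

import Mathlib

/-!
Using `cos mθ cos mτ = (cos m(θ - τ) + cos m(θ + τ)) / 2` and the analogous identity for
the sines, the `k`-th term of the left-hand series (with `m = k + 1`) becomes a combination of
four terms `x ^ m cos (mφ) / (1 - q ^ (4m))`, with `x ∈ {r, q⁴/r, q²/r, r q²}` and `φ = θ ∓ τ`.
Expanding `1 / (1 - q ^ (4m))` as a geometric series and summing over `m` first, each of these
Lambert-type series becomes `∑ⱼ (P (x q^(4j)) φ - 1) / 2`, where `P` is the Poisson kernel,
because `∑_{m ≥ 1} x ^ m cos (mφ) = (P x φ - 1) / 2`. The `j`-th term of the result is half the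
`j`-th term of the right-hand series plus the telescoping difference
`(P (r q^(4j)) - P (r q^(4j+4))) / 2` at `θ - τ`, which sums to `(P r (θ - τ) - 1) / 2`.
-/

open Real

/-- `2π` times the Poisson kernel of the unit disc at radius `x` and angle `φ`. -/
noncomputable def diskPoissonKernel (x φ : ℝ) : ℝ :=
  (1 - x ^ 2) / (1 - 2 * x * cos φ + x ^ 2)

theorem hasSum_pow_succ_mul_cos {x : ℝ} (φ : ℝ) (hx : |x| < 1) :
    HasSum (fun m : ℕ => x ^ (m + 1) * cos (((m : ℝ) + 1) * φ))
      ((diskPoissonKernel x φ - 1) / 2) := by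
  set z : ℂ := x * Complex.exp (φ * Complex.I)
  have hz : ‖z‖ < 1 := by
    rwa [norm_mul, Complex.norm_exp_ofReal_mul_I, mul_one, Complex.norm_real]
  have hgeom : HasSum (fun m : ℕ => z ^ (m + 1)) (z / (1 - z)) := by
    simpa [pow_succ', div_eq_mul_inv] using (hasSum_geometric_of_norm_lt_one hz).mul_left z
  have hre_pow (m : ℕ) : (z ^ (m + 1)).re = x ^ (m + 1) * cos (((m : ℝ) + 1) * φ) := by
    rw [mul_pow, ← Complex.exp_nat_mul, ← Complex.ofReal_pow, Complex.re_ofReal_mul,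
      ← Complex.exp_ofReal_mul_I_re]
    push_cast
    ring_nf
  have hre_sum : (z / (1 - z)).re = (diskPoissonKernel x φ - 1) / 2 := by
    have hne : (1 - z) ≠ 0 := sub_ne_zero.2 (fun h => by simp [← h] at hz)
    have hnormSq : Complex.normSq (1 - z) = 1 - 2 * x * cos φ + x ^ 2 := by
      simp only [z, Complex.normSq_apply, Complex.sub_re, Complex.sub_im, Complex.one_re,
        Complex.one_im, Complex.re_ofReal_mul, Complex.im_ofReal_mul,
        Complex.exp_ofReal_mul_I_re, Complex.exp_ofReal_mul_I_im]
      linear_combination x ^ 2 * sin_sq_add_cos_sq φ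
    have hpos : 1 - 2 * x * cos φ + x ^ 2 ≠ 0 := hnormSq ▸ (Complex.normSq_pos.2 hne).ne'
    rw [Complex.div_re, hnormSq, diskPoissonKernel]
    simp only [z, Complex.sub_re, Complex.sub_im, Complex.one_re, Complex.one_im,
      Complex.re_ofReal_mul, Complex.im_ofReal_mul, Complex.exp_ofReal_mul_I_re,
      Complex.exp_ofReal_mul_I_im]
    generalize hD : 1 - 2 * x * cos φ + x ^ 2 = D at hpos ⊢
    field_simp
    linear_combination (-2 * x ^ 2) * sin_sq_add_cos_sq φ - hD
  rw [← hre_sum]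
  exact (Complex.hasSum_re hgeom).congr_fun fun m => (hre_pow m).symm

theorem diskPoissonKernel_div {r : ℝ} (hr : r ≠ 0) (a φ : ℝ) :
    diskPoissonKernel (a / r) φ = (r ^ 2 - a ^ 2) / (r ^ 2 - 2 * r * a * cos φ + a ^ 2) := by
  rw [diskPoissonKernel, ← mul_div_mul_left _ _ (pow_ne_zero 2 hr)]
  congr 1 <;> field_simp

theorem annulus_kernel_term_eq {q r : ℝ} (hr : r ≠ 0) {n : ℕ} (hq : q ^ (2 * n) ≠ 1)
    (t θ τ : ℝ) :
    r ^ n * ((1 + (q / r) ^ (2 * n)) / (1 + q ^ (2 * n)) * cos (t * θ) * cos (t * τ)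
      + (1 - (q / r) ^ (2 * n)) / (1 - q ^ (2 * n)) * sin (t * θ) * sin (t * τ))
    = r ^ n * cos (t * (θ - τ)) / (1 - (q ^ 4) ^ n)
      - (q ^ 4 / r) ^ n * cos (t * (θ - τ)) / (1 - (q ^ 4) ^ n)
      + (q ^ 2 / r) ^ n * cos (t * (θ + τ)) / (1 - (q ^ 4) ^ n)
      - (r * q ^ 2) ^ n * cos (t * (θ + τ)) / (1 - (q ^ 4) ^ n) := by
  have h1 : 1 - q ^ (2 * n) ≠ 0 := sub_ne_zero.2 hq.symm
  have h2 : 1 + q ^ (2 * n) ≠ 0 := by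
    rw [pow_mul]; positivity
  have hfactor : 1 - (q ^ 4) ^ n = (1 - q ^ (2 * n)) * (1 + q ^ (2 * n)) := by ring
  rw [hfactor, mul_sub t, mul_add t, cos_sub, cos_add]
  simp only [div_pow, mul_pow, ← pow_mul]
  field_simp
  ring

/-- Both sums are iterated sums of the absolutely summable double series
`x ^ (m + 1) cos ((m + 1) φ) ρ ^ ((m + 1) j)`. -/
theorem exists_hasSum_lambert_poisson {x ρ : ℝ} (φ : ℝ) (hx : |x| < 1) (hρ : |ρ| < 1) :
    ∃ s, HasSum (fun m : ℕ => x ^ (m + 1) * cos (((m : ℝ) + 1) * φ) / (1 - ρ ^ (m + 1))) s ∧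
      HasSum (fun j : ℕ => (diskPoissonKernel (x * ρ ^ j) φ - 1) / 2) s := by
  set g : ℕ × ℕ → ℝ :=
    fun p => x ^ (p.1 + 1) * cos (((p.1 : ℝ) + 1) * φ) * (ρ ^ (p.1 + 1)) ^ p.2
  have hg_le (p : ℕ × ℕ) : ‖g p‖ ≤ |x| ^ (p.1 + 1) * |ρ| ^ p.2 := by
    have hρ_pow : |ρ| ^ (p.1 + 1) ≤ |ρ| :=
      pow_le_of_le_one (abs_nonneg ρ) hρ.le p.1.succ_ne_zero
    simp only [g, norm_mul, norm_pow, Real.norm_eq_abs]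
    gcongr
    exact mul_le_of_le_one_right (by positivity) (abs_cos_le_one _)
  have hg : Summable g := by
    have hx_succ : Summable fun m : ℕ => |x| ^ (m + 1) :=
      (summable_nat_add_iff 1).2 (summable_geometric_of_lt_one (abs_nonneg x) hx)
    refine Summable.of_norm_bounded ?_ hg_le
    exact hx_succ.mul_of_nonneg (summable_geometric_of_lt_one (abs_nonneg ρ) hρ)
      (fun _ => by positivity) (fun _ => by positivity)
  have hrows (m : ℕ) : HasSum (fun j => g (m, j))
      (x ^ (m + 1) * cos (((m : ℝ) + 1) * φ) / (1 - ρ ^ (m + 1))) := by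
    have hρm : ‖ρ ^ (m + 1)‖ < 1 := by
      rw [norm_pow, Real.norm_eq_abs]; exact pow_lt_one₀ (abs_nonneg ρ) hρ m.succ_ne_zero
    simpa [g, div_eq_mul_inv] using (hasSum_geometric_of_norm_lt_one hρm).mul_left
      (x ^ (m + 1) * cos (((m : ℝ) + 1) * φ))
  have hcols (j : ℕ) :
      HasSum (fun m => g (m, j)) ((diskPoissonKernel (x * ρ ^ j) φ - 1) / 2) := by
    have hxρ : |x * ρ ^ j| < 1 := by
      rw [abs_mul, abs_pow]
      exact mul_lt_one_of_nonneg_of_lt_one_left (abs_nonneg x) hx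
        (pow_le_one₀ (abs_nonneg ρ) hρ.le)
    refine (hasSum_pow_succ_mul_cos φ hxρ).congr_fun fun m => ?_
    simp only [g]
    ring
  exact ⟨_, hg.hasSum.prod_fiberwise hrows,
    ((Equiv.prodComm ℕ ℕ).hasSum_iff.2 hg.hasSum).prod_fiberwise hcols⟩

theorem HasSum.sub_nat_succ {G : Type*} [AddCommGroup G] [TopologicalSpace G]
    [IsTopologicalAddGroup G] {f : ℕ → G} {a : G} (hf : HasSum f a) :
    HasSum (fun n => f n - f (n + 1)) (f 0) := by
  have hshift : HasSum (fun n => f (n + 1)) (a - f 0) := by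
    simpa using (hasSum_nat_add_iff' 1).2 hf
  simpa using hf.sub hshift

/-- the kernel of the annulus series solution equals a superposition
of classical Poisson kernels; both series converge absolutely. -/
theorem kernel_poisson_superposition
    (q r θ τ : ℝ) (hq0 : 0 < q) (hq1 : q < 1) (hr1 : q ^ 2 < r) (hr2 : r < 1)
    (L P : ℕ → ℝ)
    (hL : ∀ k : ℕ, L k =
      r ^ (k + 1) *
        (((1 + (q / r) ^ (2 * (k + 1))) / (1 + q ^ (2 * (k + 1))))
            * Real.cos (((k : ℝ) + 1) * θ) * Real.cos (((k : ℝ) + 1) * τ)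
          + ((1 - (q / r) ^ (2 * (k + 1))) / (1 - q ^ (2 * (k + 1))))
            * Real.sin (((k : ℝ) + 1) * θ) * Real.sin (((k : ℝ) + 1) * τ)))
    (hP : ∀ j : ℕ, P j =
      (r ^ 2 - q ^ (4 * (2 * j + 1)))
          / (r ^ 2 - 2 * r * q ^ (2 * (2 * j + 1)) * Real.cos (θ + τ) + q ^ (4 * (2 * j + 1)))
        - (1 - r ^ 2 * q ^ (4 * (2 * j + 1)))
          / (1 - 2 * r * q ^ (2 * (2 * j + 1)) * Real.cos (θ + τ) + r ^ 2 * q ^ (4 * (2 * j + 1)))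
        - (r ^ 2 - q ^ (8 * (j + 1)))
          / (r ^ 2 - 2 * r * q ^ (4 * (j + 1)) * Real.cos (θ - τ) + q ^ (8 * (j + 1)))
        + (1 - r ^ 2 * q ^ (8 * (j + 1)))
          / (1 - 2 * r * q ^ (4 * (j + 1)) * Real.cos (θ - τ) + r ^ 2 * q ^ (8 * (j + 1)))) :
    (Summable fun k : ℕ => |L k|) ∧ (Summable fun j : ℕ => |P j|) ∧
    1 / (2 * π) + (1 / π) * ∑' k : ℕ, L k
      = (1 / (2 * π)) * (1 - r ^ 2) / (1 - 2 * r * Real.cos (θ - τ) + r ^ 2)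
        + (1 / (2 * π)) * ∑' j : ℕ, P j := by
  have hr0 : 0 < r := (pow_pos hq0 2).trans hr1
  have hq4 : q ^ 4 < q ^ 2 := pow_lt_pow_right_of_lt_one₀ hq0 hq1 (by norm_num)
  have hρ : |q ^ 4| < 1 := by
    rw [abs_of_pos (by positivity)]; exact pow_lt_one₀ hq0.le hq1 (by norm_num)
  have hr_abs : |r| < 1 := by rwa [abs_of_pos hr0]
  have hq2r : q ^ 2 / r < 1 := (div_lt_one hr0).2 hr1
  obtain ⟨s₁, hL₁, hK₁⟩ := exists_hasSum_lambert_poisson (θ - τ) hr_abs hρ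
  obtain ⟨s₂, hL₂, hK₂⟩ := exists_hasSum_lambert_poisson (x := q ^ 4 / r) (θ - τ)
    (by rw [abs_of_pos (by positivity), div_lt_one hr0]; linarith) hρ
  obtain ⟨s₃, hL₃, hK₃⟩ := exists_hasSum_lambert_poisson (x := q ^ 2 / r) (θ + τ)
    (by rwa [abs_of_pos (by positivity)]) hρ
  obtain ⟨s₄, hL₄, hK₄⟩ := exists_hasSum_lambert_poisson (x := r * q ^ 2) (θ + τ)
    (by rw [abs_of_pos (by positivity)]; nlinarith) hρ
  have hLsum : HasSum L (s₁ - s₂ + s₃ - s₄) :=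
    (((hL₁.sub hL₂).add hL₃).sub hL₄).congr_fun fun k => by
      rw [hL k, annulus_kernel_term_eq hr0.ne' (pow_lt_one₀ hq0.le hq1 (by omega)).ne]
  have hPsum : HasSum P (2 * (s₁ - s₂ + s₃ - s₄ - (diskPoissonKernel r (θ - τ) - 1) / 2)) := by
    have hcol := (((((hK₁.sub hK₂).add hK₃).sub hK₄).sub hK₁.sub_nat_succ).mul_left 2)
    rw [pow_zero, mul_one] at hcol
    refine hcol.congr_fun fun j => ?_
    rw [hP j, show q ^ 4 / r * (q ^ 4) ^ j = q ^ (4 * (j + 1)) / r by ring,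
      show q ^ 2 / r * (q ^ 4) ^ j = q ^ (2 * (2 * j + 1)) / r by ring,
      diskPoissonKernel_div hr0.ne', diskPoissonKernel_div hr0.ne']
    simp only [diskPoissonKernel]
    ring
  refine ⟨hLsum.summable.abs, hPsum.summable.abs, ?_⟩
  rw [hLsum.tsum_eq, hPsum.tsum_eq, mul_div_assoc, ← diskPoissonKernel]
  field_simp
  ring
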